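/- Let ρ be a left-continuous convex modular on a real vector space X and let Λ : X_ρ → ℝ be a linear functional. Consider: (i) Λ is continuous with respect to the modular topology, i.e., Λ⁻¹(U) is τ_ρ-open for every open U ⊆ ℝ; (iii) for every sequence (x_j) ⊆ X_ρ with ρ(x_j) → 0 one has Λ(x_j) → 0; (iv) Λ is bounded on {x ∈ X_ρ : ρ(x) < 1}; (v) Λ is bounded on {x ∈ X_ρ : ρ(x) ≤ 1}; (vi) Λ is bounded on {x ∈ X_ρ : ρ(x − x₀) ≤ r} for every x₀ ∈ X_ρ and r > 0; (vii) Λ is bounded on {x ∈ X_ρ : ρ(x − x₀) < r} for every x₀ ∈ X_ρ and r > 0; (viii) Λ is bounded on every set A ⊆ X_ρ of finite modular diameter. Then (i) ⇔ (iii) ⇒ (iv) ⇔ (v) ⇔ (vi) ⇔ (vii) ⇒ (viii), and (i) implies that Λ is bounded with respect to the Luxemburg norm, i.e., there exists C ≥ 0 with |Λ(x)| ≤ C‖x‖_ρ for all x ∈ X_ρ. -/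

import Mathlib

open Filter Topology ENNReal

/-- A convex modular on a real vector space `X`. -/
structure IsConvexModular {X : Type*} [AddCommGroup X] [Module ℝ X] (ρ : X → ℝ≥0∞) : Prop where
  zero_iff : ∀ u : X, ρ u = 0 ↔ u = 0
  neg_eq : ∀ u : X, ρ (-u) = ρ u
  convex : ∀ α : ℝ, 0 ≤ α → α ≤ 1 → ∀ u v : X,
    ρ (α • u + (1 - α) • v) ≤ ENNReal.ofReal α * ρ u + ENNReal.ofReal (1 - α) * ρ v

/-- `X_ρ`, the modular vector space associated to `ρ`. -/
def modularSet {X : Type*} [AddCommGroup X] [Module ℝ X] (ρ : X → ℝ≥0∞) : Set X :=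
  {v : X | ∃ l : ℝ, 0 < l ∧ ρ (l • v) < ⊤}

/-- A set `A ⊆ X_ρ` is `τ_ρ`-open if every point of `A` contains a modular ball around it. -/
def IsTauRhoOpen {X : Type*} [AddCommGroup X] [Module ℝ X] (ρ : X → ℝ≥0∞) (A : Set X) : Prop :=
  A ⊆ modularSet ρ ∧
    ∀ x ∈ A, ∃ ε : ℝ, 0 < ε ∧ {y ∈ modularSet ρ | ρ (y - x) < ENNReal.ofReal ε} ⊆ A

/-- `ρ` is left-continuous. -/
def IsLeftContinuousModular {X : Type*} [AddCommGroup X] [Module ℝ X] (ρ : X → ℝ≥0∞) : Prop :=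
  ∀ (u : X) (l₀ : ℝ), 0 < l₀ →
    Tendsto (fun l : ℝ => ρ (l • u)) (nhdsWithin l₀ (Set.Iio l₀)) (nhds (ρ (l₀ • u)))

/-- The Luxemburg norm `‖x‖_ρ := inf {λ > 0 : ρ(x/λ) ≤ 1}`. -/
noncomputable def luxNorm {X : Type*} [AddCommGroup X] [Module ℝ X] (ρ : X → ℝ≥0∞) (x : X) : ℝ :=
  sInf {l : ℝ | 0 < l ∧ ρ (l⁻¹ • x) ≤ 1}


/-! Modular balls `{y | ρ (y - x) < ε}` form a neighbourhood base of `τ_ρ`, so by additivity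
modular continuity of `Λ` reduces to sequential modular continuity at `0`. Convexity gives
`ρ (t • u) ≤ t ρ u` for `0 ≤ t ≤ 1`, so a positive multiple maps any sublevel set `{ρ ≤ r}` into
any other; by homogeneity of `Λ`, a bound on one modular ball about `0` gives a bound on every
modular ball. If `|Λ| ≤ C` on `{ρ ≤ 1}`, then `ρ (l⁻¹ • x) ≤ 1` forces `|Λ x| ≤ C l`, and the
infimum of such `l` is the Luxemburg norm. -/

namespace IsConvexModular

variable {X : Type*} [AddCommGroup X] [Module ℝ X] {ρ : X → ℝ≥0∞}

theorem map_zero (hρ : IsConvexModular ρ) : ρ 0 = 0 := (hρ.zero_iff 0).mpr rfl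

theorem map_abs_smul (hρ : IsConvexModular ρ) (a : ℝ) (u : X) : ρ (|a| • u) = ρ (a • u) := by
  rcases abs_choice a with h | h <;> rw [h]
  rw [neg_smul, hρ.neg_eq]

theorem smul_le_ofReal_mul (hρ : IsConvexModular ρ) {t : ℝ} (ht0 : 0 ≤ t) (ht1 : t ≤ 1) (u : X) :
    ρ (t • u) ≤ ENNReal.ofReal t * ρ u := by
  simpa [hρ.map_zero] using hρ.convex t ht0 ht1 u 0

theorem smul_le_ofReal_mul_of_le (hρ : IsConvexModular ρ) {t r : ℝ} (ht0 : 0 ≤ t) (ht1 : t ≤ 1)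
    {u : X} (hu : ρ u ≤ ENNReal.ofReal r) : ρ (t • u) ≤ ENNReal.ofReal (t * r) :=
  calc ρ (t • u) ≤ ENNReal.ofReal t * ρ u := hρ.smul_le_ofReal_mul ht0 ht1 u
    _ ≤ ENNReal.ofReal t * ENNReal.ofReal r := by gcongr
    _ = ENNReal.ofReal (t * r) := (ENNReal.ofReal_mul ht0).symm

theorem smul_lt_top_of_le (hρ : IsConvexModular ρ) {l t : ℝ} (ht0 : 0 ≤ t) (htl : t ≤ l)
    {u : X} (hu : ρ (l • u) < ⊤) : ρ (t • u) < ⊤ := by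
  rcases ht0.eq_or_lt with rfl | ht
  · simp [hρ.map_zero]
  have hl : 0 < l := ht.trans_le htl
  have htu : t • u = (t / l) • l • u := by rw [smul_smul, div_mul_cancel₀ _ hl.ne']
  rw [htu]
  exact (hρ.smul_le_ofReal_mul (by positivity) ((div_le_one hl).2 htl) _).trans_lt
    (ENNReal.mul_lt_top ofReal_lt_top hu)

def modularSubmodule (hρ : IsConvexModular ρ) : Submodule ℝ X where
  carrier := modularSet ρ
  zero_mem' := ⟨1, one_pos, by simp [hρ.map_zero]⟩
  add_mem' := by
    rintro x y ⟨l₁, hl₁, hx⟩ ⟨l₂, hl₂, hy⟩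
    set l := min l₁ l₂
    have hx' : ρ (l • x) < ⊤ := hρ.smul_lt_top_of_le (lt_min hl₁ hl₂).le (min_le_left _ _) hx
    have hy' : ρ (l • y) < ⊤ := hρ.smul_lt_top_of_le (lt_min hl₁ hl₂).le (min_le_right _ _) hy
    refine ⟨l / 2, half_pos (lt_min hl₁ hl₂), ?_⟩
    have hmid : (l / 2) • (x + y) = (1 / 2 : ℝ) • (l • x) + (1 - 1 / 2 : ℝ) • (l • y) := by
      rw [smul_smul, smul_smul, smul_add]; norm_num [div_eq_inv_mul]
    rw [hmid]
    refine (hρ.convex _ (by norm_num) (by norm_num) _ _).trans_lt ?_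
    exact ENNReal.add_lt_top.2 ⟨ENNReal.mul_lt_top ofReal_lt_top hx',
      ENNReal.mul_lt_top ofReal_lt_top hy'⟩
  smul_mem' := by
    rintro c x ⟨l, hl, hx⟩
    refine ⟨l / (|c| + 1), by positivity, ?_⟩
    rw [smul_smul, ← hρ.map_abs_smul]
    refine hρ.smul_lt_top_of_le (abs_nonneg _) ?_ hx
    rw [abs_mul, abs_of_pos (by positivity), div_mul_eq_mul_div, div_le_iff₀ (by positivity)]
    nlinarith [abs_nonneg c]

theorem zero_mem (hρ : IsConvexModular ρ) : (0 : X) ∈ modularSet ρ :=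
  hρ.modularSubmodule.zero_mem

theorem smul_mem (hρ : IsConvexModular ρ) (c : ℝ) {x : X} (hx : x ∈ modularSet ρ) :
    c • x ∈ modularSet ρ :=
  hρ.modularSubmodule.smul_mem c hx

theorem sub_mem (hρ : IsConvexModular ρ) {x y : X} (hx : x ∈ modularSet ρ)
    (hy : y ∈ modularSet ρ) : x - y ∈ modularSet ρ :=
  hρ.modularSubmodule.sub_mem hx hy

theorem exists_pos_rho_inv_smul_le_one (hρ : IsConvexModular ρ) {x : X}
    (hx : x ∈ modularSet ρ) : ∃ l : ℝ, 0 < l ∧ ρ (l⁻¹ • x) ≤ 1 := by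
  obtain ⟨l₀, hl₀, hfin⟩ := hx
  set R := (ρ (l₀ • x)).toReal
  have hR : 0 ≤ R := toReal_nonneg
  refine ⟨((R + 1)⁻¹ * l₀)⁻¹, by positivity, ?_⟩
  rw [inv_inv, ← smul_smul]
  calc ρ ((R + 1)⁻¹ • l₀ • x) ≤ ENNReal.ofReal ((R + 1)⁻¹ * R) :=
        hρ.smul_le_ofReal_mul_of_le (by positivity) (inv_le_one_of_one_le₀ (by linarith))
          (ofReal_toReal hfin.ne).ge
    _ ≤ 1 := ofReal_le_one.2 (by rw [inv_mul_le_iff₀ (by positivity)]; linarith)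

end IsConvexModular

theorem isTauRhoOpen_of_forall_tendsto {X : Type*} [AddCommGroup X] [Module ℝ X]
    {ρ : X → ℝ≥0∞} {A : Set X} (hA : A ⊆ modularSet ρ)
    (h : ∀ x ∈ A, ∀ y : ℕ → X, (∀ j, y j ∈ modularSet ρ) →
      Tendsto (fun j => ρ (y j - x)) atTop (𝓝 0) → ∃ j, y j ∈ A) :
    IsTauRhoOpen ρ A := by
  refine ⟨hA, fun x hx => ?_⟩
  by_contra! hcon
  choose y hy hyA using fun j : ℕ => Set.not_subset.1 (hcon (1 / ((j : ℝ) + 1)) (by positivity))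
  have hyx : Tendsto (fun j => ρ (y j - x)) atTop (𝓝 0) :=
    tendsto_of_tendsto_of_tendsto_of_le_of_le tendsto_const_nhds
      (by simpa using ENNReal.tendsto_ofReal tendsto_one_div_add_atTop_nhds_zero_nat)
      (fun _ => zero_le) (fun j => (hy j).2.le)
  obtain ⟨j, hj⟩ := h x hx y (fun j => (hy j).1) hyx
  exact hyA j hj

section LinearFunctional

variable {X : Type*} [AddCommGroup X] [Module ℝ X] {ρ : X → ℝ≥0∞} {Λ : X → ℝ}

theorem map_zero_of_map_smul (hρ : IsConvexModular ρ)
    (hsmul : ∀ (c : ℝ), ∀ x ∈ modularSet ρ, Λ (c • x) = c * Λ x) : Λ 0 = 0 := by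
  simpa using hsmul 0 0 hρ.zero_mem

theorem abs_le_div_of_abs_smul_le (hsmul : ∀ (c : ℝ), ∀ x ∈ modularSet ρ, Λ (c • x) = c * Λ x)
    {t C : ℝ} (ht : 0 < t) {x : X} (hx : x ∈ modularSet ρ) (h : |Λ (t • x)| ≤ C) :
    |Λ x| ≤ C / t := by
  rw [hsmul t x hx, abs_mul, abs_of_pos ht] at h
  rwa [le_div_iff₀' ht]

theorem exists_abs_lt_of_rho_lt (hρ : IsConvexModular ρ) (h0 : Λ 0 = 0)
    (hi : ∀ U : Set ℝ, IsOpen U → IsTauRhoOpen ρ (modularSet ρ ∩ Λ ⁻¹' U)) {ε : ℝ} (hε : 0 < ε) :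
    ∃ δ > 0, ∀ x ∈ modularSet ρ, ρ x < ENNReal.ofReal δ → |Λ x| < ε := by
  obtain ⟨δ, hδ, hball⟩ := (hi _ (isOpen_Ioo (a := -ε) (b := ε))).2 0
    ⟨hρ.zero_mem, by simp [h0, hε]⟩
  exact ⟨δ, hδ, fun x hx hxδ => abs_lt.2 (hball ⟨hx, by simpa using hxδ⟩).2⟩

theorem tendsto_of_isTauRhoOpen_preimage (hρ : IsConvexModular ρ) (h0 : Λ 0 = 0)
    (hi : ∀ U : Set ℝ, IsOpen U → IsTauRhoOpen ρ (modularSet ρ ∩ Λ ⁻¹' U))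
    (x : ℕ → X) (hx : ∀ j, x j ∈ modularSet ρ) (hx0 : Tendsto (fun j => ρ (x j)) atTop (𝓝 0)) :
    Tendsto (fun j => Λ (x j)) atTop (𝓝 0) := by
  rw [Metric.tendsto_atTop]
  intro ε hε
  obtain ⟨δ, hδ, hsmall⟩ := exists_abs_lt_of_rho_lt hρ h0 hi hε
  obtain ⟨N, hN⟩ := eventually_atTop.1 (hx0.eventually_lt_const (ofReal_pos.2 hδ))
  exact ⟨N, fun j hj => by simpa using hsmall _ (hx j) (hN j hj)⟩

theorem isTauRhoOpen_preimage_of_tendsto (hρ : IsConvexModular ρ)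
    (hadd : ∀ x ∈ modularSet ρ, ∀ y ∈ modularSet ρ, Λ (x + y) = Λ x + Λ y)
    (hiii : ∀ x : ℕ → X, (∀ j, x j ∈ modularSet ρ) →
      Tendsto (fun j => ρ (x j)) atTop (𝓝 0) → Tendsto (fun j => Λ (x j)) atTop (𝓝 0)) :
    ∀ U : Set ℝ, IsOpen U → IsTauRhoOpen ρ (modularSet ρ ∩ Λ ⁻¹' U) := by
  intro U hU
  refine isTauRhoOpen_of_forall_tendsto Set.inter_subset_left fun x ⟨hx, hxU⟩ y hy hyx => ?_
  have hsub : ∀ j, y j - x ∈ modularSet ρ := fun j => hρ.sub_mem (hy j) hx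
  have hΛy : Tendsto (fun j => Λ (y j - x) + Λ x) atTop (𝓝 (Λ x)) := by
    simpa using (hiii _ hsub hyx).add_const (Λ x)
  have hsplit : ∀ j, Λ (y j - x) + Λ x = Λ (y j) := fun j => by
    rw [← hadd _ (hsub j) _ hx, sub_add_cancel]
  simp only [hsplit] at hΛy
  obtain ⟨j, hj⟩ := (hΛy.eventually (hU.mem_nhds hxU)).exists
  exact ⟨j, hy j, hj⟩

theorem exists_bound_rho_le_of_bound_rho_le (hρ : IsConvexModular ρ)
    (hsmul : ∀ (c : ℝ), ∀ x ∈ modularSet ρ, Λ (c • x) = c * Λ x) {s r C : ℝ} (hs : 0 < s)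
    (hr : 0 < r) (hC : ∀ x ∈ modularSet ρ, ρ x ≤ ENNReal.ofReal s → |Λ x| ≤ C) :
    ∃ C' : ℝ, ∀ x ∈ modularSet ρ, ρ x ≤ ENNReal.ofReal r → |Λ x| ≤ C' := by
  set t := min 1 (s / r)
  have ht : 0 < t := lt_min one_pos (div_pos hs hr)
  have htr : t * r ≤ s := by
    calc t * r ≤ s / r * r := by gcongr; exact min_le_right _ _
      _ = s := div_mul_cancel₀ _ hr.ne'
  refine ⟨C / t, fun x hx hxr => abs_le_div_of_abs_smul_le hsmul ht hx
    (hC _ (hρ.smul_mem t hx) ?_)⟩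
  exact (hρ.smul_le_ofReal_mul_of_le ht.le (min_le_left _ _) hxr).trans (ofReal_le_ofReal htr)

theorem exists_bound_rho_lt_one_of_isTauRhoOpen (hρ : IsConvexModular ρ)
    (hsmul : ∀ (c : ℝ), ∀ x ∈ modularSet ρ, Λ (c • x) = c * Λ x)
    (hi : ∀ U : Set ℝ, IsOpen U → IsTauRhoOpen ρ (modularSet ρ ∩ Λ ⁻¹' U)) :
    ∃ C : ℝ, ∀ x ∈ modularSet ρ, ρ x < 1 → |Λ x| ≤ C := by
  obtain ⟨δ, hδ, hsmall⟩ := exists_abs_lt_of_rho_lt hρ (map_zero_of_map_smul hρ hsmul) hi one_pos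
  have hδ2 : ENNReal.ofReal (δ / 2) < ENNReal.ofReal δ :=
    (ofReal_lt_ofReal_iff hδ).2 (half_lt_self hδ)
  obtain ⟨C, hC⟩ := exists_bound_rho_le_of_bound_rho_le hρ hsmul (half_pos hδ) one_pos
    fun x hx hxδ => (hsmall x hx (hxδ.trans_lt hδ2)).le
  exact ⟨C, fun x hx hx1 => hC x hx (by rw [ofReal_one]; exact hx1.le)⟩

theorem exists_bound_rho_le_one_of_rho_lt_one (hρ : IsConvexModular ρ)
    (hsmul : ∀ (c : ℝ), ∀ x ∈ modularSet ρ, Λ (c • x) = c * Λ x)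
    (h : ∃ C : ℝ, ∀ x ∈ modularSet ρ, ρ x < 1 → |Λ x| ≤ C) :
    ∃ C : ℝ, ∀ x ∈ modularSet ρ, ρ x ≤ 1 → |Λ x| ≤ C := by
  obtain ⟨C, hC⟩ := h
  have hhalf : ENNReal.ofReal (1 / 2) < 1 := by rw [ofReal_lt_one]; norm_num
  obtain ⟨C', hC'⟩ := exists_bound_rho_le_of_bound_rho_le hρ hsmul (by norm_num) one_pos
    fun x hx hx2 => hC x hx (hx2.trans_lt hhalf)
  exact ⟨C', fun x hx hx1 => hC' x hx (by rwa [ofReal_one])⟩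

theorem exists_bound_rho_sub_le (hρ : IsConvexModular ρ)
    (hadd : ∀ x ∈ modularSet ρ, ∀ y ∈ modularSet ρ, Λ (x + y) = Λ x + Λ y)
    (hsmul : ∀ (c : ℝ), ∀ x ∈ modularSet ρ, Λ (c • x) = c * Λ x)
    (h : ∃ C : ℝ, ∀ x ∈ modularSet ρ, ρ x ≤ 1 → |Λ x| ≤ C) {x₀ : X} (hx₀ : x₀ ∈ modularSet ρ)
    {r : ℝ} (hr : 0 < r) :
    ∃ C : ℝ, ∀ x ∈ modularSet ρ, ρ (x - x₀) ≤ ENNReal.ofReal r → |Λ x| ≤ C := by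
  obtain ⟨C, hC⟩ := h
  obtain ⟨C', hC'⟩ := exists_bound_rho_le_of_bound_rho_le hρ hsmul one_pos hr
    fun x hx hx1 => hC x hx (by rwa [ofReal_one] at hx1)
  refine ⟨C' + |Λ x₀|, fun x hx hxr => ?_⟩
  have hsub := hρ.sub_mem hx hx₀
  calc |Λ x| = |Λ (x - x₀) + Λ x₀| := by rw [← hadd _ hsub _ hx₀, sub_add_cancel]
    _ ≤ |Λ (x - x₀)| + |Λ x₀| := abs_add_le _ _
    _ ≤ C' + |Λ x₀| := by gcongr; exact hC' _ hsub hxr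

theorem exists_bound_of_rho_sub_lt {A : Set X} (hA : A ⊆ modularSet ρ)
    (h : ∀ x₀ ∈ modularSet ρ, ∀ r : ℝ, 0 < r →
      ∃ C : ℝ, ∀ x ∈ modularSet ρ, ρ (x - x₀) < ENNReal.ofReal r → |Λ x| ≤ C)
    {M : ℝ≥0∞} (hM : M < ⊤) (hdiam : ∀ a ∈ A, ∀ b ∈ A, ρ (a - b) ≤ M) :
    ∃ C : ℝ, ∀ a ∈ A, |Λ a| ≤ C := by
  rcases A.eq_empty_or_nonempty with rfl | ⟨a₀, ha₀⟩
  · exact ⟨0, by simp⟩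
  obtain ⟨C, hC⟩ := h a₀ (hA ha₀) (M.toReal + 1) (by positivity)
  have hMr : M < ENNReal.ofReal (M.toReal + 1) := by
    rw [lt_ofReal_iff_toReal_lt hM.ne]; linarith
  exact ⟨C, fun a ha => hC a (hA ha) ((hdiam a ha a₀ ha₀).trans_lt hMr)⟩

theorem abs_le_mul_luxNorm (hρ : IsConvexModular ρ)
    (hsmul : ∀ (c : ℝ), ∀ x ∈ modularSet ρ, Λ (c • x) = c * Λ x) {C : ℝ}
    (hC : ∀ x ∈ modularSet ρ, ρ x ≤ 1 → |Λ x| ≤ C) (hC0 : 0 ≤ C) {x : X}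
    (hx : x ∈ modularSet ρ) : |Λ x| ≤ C * luxNorm ρ x := by
  obtain ⟨l₀, hl₀⟩ := hρ.exists_pos_rho_inv_smul_le_one hx
  rw [luxNorm, ← smul_eq_mul, ← Real.sInf_smul_of_nonneg hC0]
  refine le_csInf ⟨C * l₀, l₀, hl₀, rfl⟩ ?_
  rintro _ ⟨l, ⟨hl, hl1⟩, rfl⟩
  simpa [div_inv_eq_mul] using
    abs_le_div_of_abs_smul_le hsmul (inv_pos.2 hl) hx (hC _ (hρ.smul_mem _ hx) hl1)

end LinearFunctional

theorem modular_dual_characterization_general {X : Type*} [AddCommGroup X] [Module ℝ X]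
    (ρ : X → ℝ≥0∞) (hρ : IsConvexModular ρ)
    (Λ : X → ℝ)
    (hadd : ∀ x ∈ modularSet ρ, ∀ y ∈ modularSet ρ, Λ (x + y) = Λ x + Λ y)
    (hsmul : ∀ (c : ℝ), ∀ x ∈ modularSet ρ, Λ (c • x) = c * Λ x) :
    -- (i) ⇔ (iii)
    ((∀ U : Set ℝ, IsOpen U → IsTauRhoOpen ρ (modularSet ρ ∩ Λ ⁻¹' U)) ↔
      (∀ x : ℕ → X, (∀ j, x j ∈ modularSet ρ) →
        Tendsto (fun j => ρ (x j)) atTop (nhds 0) →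
        Tendsto (fun j => Λ (x j)) atTop (nhds 0))) ∧
    -- (iii) ⇒ (iv)
    ((∀ x : ℕ → X, (∀ j, x j ∈ modularSet ρ) →
        Tendsto (fun j => ρ (x j)) atTop (nhds 0) →
        Tendsto (fun j => Λ (x j)) atTop (nhds 0)) →
      (∃ C : ℝ, ∀ x ∈ modularSet ρ, ρ x < 1 → |Λ x| ≤ C)) ∧
    -- (iv) ⇔ (v)
    ((∃ C : ℝ, ∀ x ∈ modularSet ρ, ρ x < 1 → |Λ x| ≤ C) ↔
      (∃ C : ℝ, ∀ x ∈ modularSet ρ, ρ x ≤ 1 → |Λ x| ≤ C)) ∧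
    -- (v) ⇔ (vi)
    ((∃ C : ℝ, ∀ x ∈ modularSet ρ, ρ x ≤ 1 → |Λ x| ≤ C) ↔
      (∀ x₀ ∈ modularSet ρ, ∀ r : ℝ, 0 < r →
        ∃ C : ℝ, ∀ x ∈ modularSet ρ, ρ (x - x₀) ≤ ENNReal.ofReal r → |Λ x| ≤ C)) ∧
    -- (vi) ⇔ (vii)
    ((∀ x₀ ∈ modularSet ρ, ∀ r : ℝ, 0 < r →
        ∃ C : ℝ, ∀ x ∈ modularSet ρ, ρ (x - x₀) ≤ ENNReal.ofReal r → |Λ x| ≤ C) ↔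
      (∀ x₀ ∈ modularSet ρ, ∀ r : ℝ, 0 < r →
        ∃ C : ℝ, ∀ x ∈ modularSet ρ, ρ (x - x₀) < ENNReal.ofReal r → |Λ x| ≤ C)) ∧
    -- (vii) ⇒ (viii)
    ((∀ x₀ ∈ modularSet ρ, ∀ r : ℝ, 0 < r →
        ∃ C : ℝ, ∀ x ∈ modularSet ρ, ρ (x - x₀) < ENNReal.ofReal r → |Λ x| ≤ C) →
      (∀ A : Set X, A ⊆ modularSet ρ →
        (∃ M : ℝ≥0∞, M < ⊤ ∧ ∀ a ∈ A, ∀ b ∈ A, ρ (a - b) ≤ M) →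
        ∃ C : ℝ, ∀ a ∈ A, |Λ a| ≤ C)) ∧
    -- (i) ⇒ norm-boundedness
    ((∀ U : Set ℝ, IsOpen U → IsTauRhoOpen ρ (modularSet ρ ∩ Λ ⁻¹' U)) →
      (∃ C : ℝ, 0 ≤ C ∧ ∀ x ∈ modularSet ρ, |Λ x| ≤ C * luxNorm ρ x)) := by
  have h0 : Λ 0 = 0 := map_zero_of_map_smul hρ hsmul
  have h31 := isTauRhoOpen_preimage_of_tendsto hρ hadd
  have h45 : (∃ C : ℝ, ∀ x ∈ modularSet ρ, ρ x < 1 → |Λ x| ≤ C) ↔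
      (∃ C : ℝ, ∀ x ∈ modularSet ρ, ρ x ≤ 1 → |Λ x| ≤ C) :=
    ⟨exists_bound_rho_le_one_of_rho_lt_one hρ hsmul,
      fun ⟨C, hC⟩ => ⟨C, fun x hx hx1 => hC x hx hx1.le⟩⟩
  refine ⟨⟨tendsto_of_isTauRhoOpen_preimage hρ h0, h31⟩,
    fun hiii => exists_bound_rho_lt_one_of_isTauRhoOpen hρ hsmul (h31 hiii), h45,
    ⟨fun h x₀ hx₀ r hr => exists_bound_rho_sub_le hρ hadd hsmul h hx₀ hr, fun h => ?_⟩,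
    ⟨fun h x₀ hx₀ r hr => ?_, fun h x₀ hx₀ r hr => ?_⟩,
    fun h A hA ⟨M, hM, hdiam⟩ => exists_bound_of_rho_sub_lt hA h hM hdiam, fun hi => ?_⟩
  · obtain ⟨C, hC⟩ := h 0 hρ.zero_mem 1 one_pos
    exact ⟨C, fun x hx hx1 => hC x hx (by simpa using hx1)⟩
  · obtain ⟨C, hC⟩ := h x₀ hx₀ r hr
    exact ⟨C, fun x hx hxr => hC x hx hxr.le⟩
  · obtain ⟨C, hC⟩ := h x₀ hx₀ (r + 1) (by linarith)
    have hr1 : ENNReal.ofReal r < ENNReal.ofReal (r + 1) :=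
      (ofReal_lt_ofReal_iff (by linarith)).2 (lt_add_one r)
    exact ⟨C, fun x hx hxr => hC x hx (hxr.trans_lt hr1)⟩
  · obtain ⟨C, hC⟩ := h45.1 (exists_bound_rho_lt_one_of_isTauRhoOpen hρ hsmul hi)
    have hC0 : 0 ≤ C := by simpa [h0] using hC 0 hρ.zero_mem (by simp [hρ.map_zero])
    exact ⟨C, hC0, fun x hx => abs_le_mul_luxNorm hρ hsmul hC hC0 hx⟩

/-- Characterizations of modularly continuous linear functionals on `X_ρ`.
With (i) modular continuity, (iii) sequential `ρ`-continuity at `0`,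
(iv)–(vii) boundedness on modular balls, (viii) boundedness on sets of finite modular
diameter: (i) ⇔ (iii) ⇒ (iv) ⇔ (v) ⇔ (vi) ⇔ (vii) ⇒ (viii), and (i) implies
boundedness with respect to the Luxemburg norm. -/
theorem modular_dual_characterization {X : Type*} [AddCommGroup X] [Module ℝ X]
    (ρ : X → ℝ≥0∞) (hρ : IsConvexModular ρ) (hlc : IsLeftContinuousModular ρ)
    (Λ : X → ℝ)
    (hadd : ∀ x ∈ modularSet ρ, ∀ y ∈ modularSet ρ, Λ (x + y) = Λ x + Λ y)
    (hsmul : ∀ (c : ℝ), ∀ x ∈ modularSet ρ, Λ (c • x) = c * Λ x) :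
    -- (i) ⇔ (iii)
    ((∀ U : Set ℝ, IsOpen U → IsTauRhoOpen ρ (modularSet ρ ∩ Λ ⁻¹' U)) ↔
      (∀ x : ℕ → X, (∀ j, x j ∈ modularSet ρ) →
        Tendsto (fun j => ρ (x j)) atTop (nhds 0) →
        Tendsto (fun j => Λ (x j)) atTop (nhds 0))) ∧
    -- (iii) ⇒ (iv)
    ((∀ x : ℕ → X, (∀ j, x j ∈ modularSet ρ) →
        Tendsto (fun j => ρ (x j)) atTop (nhds 0) →
        Tendsto (fun j => Λ (x j)) atTop (nhds 0)) →
      (∃ C : ℝ, ∀ x ∈ modularSet ρ, ρ x < 1 → |Λ x| ≤ C)) ∧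
    -- (iv) ⇔ (v)
    ((∃ C : ℝ, ∀ x ∈ modularSet ρ, ρ x < 1 → |Λ x| ≤ C) ↔
      (∃ C : ℝ, ∀ x ∈ modularSet ρ, ρ x ≤ 1 → |Λ x| ≤ C)) ∧
    -- (v) ⇔ (vi)
    ((∃ C : ℝ, ∀ x ∈ modularSet ρ, ρ x ≤ 1 → |Λ x| ≤ C) ↔
      (∀ x₀ ∈ modularSet ρ, ∀ r : ℝ, 0 < r →
        ∃ C : ℝ, ∀ x ∈ modularSet ρ, ρ (x - x₀) ≤ ENNReal.ofReal r → |Λ x| ≤ C)) ∧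
    -- (vi) ⇔ (vii)
    ((∀ x₀ ∈ modularSet ρ, ∀ r : ℝ, 0 < r →
        ∃ C : ℝ, ∀ x ∈ modularSet ρ, ρ (x - x₀) ≤ ENNReal.ofReal r → |Λ x| ≤ C) ↔
      (∀ x₀ ∈ modularSet ρ, ∀ r : ℝ, 0 < r →
        ∃ C : ℝ, ∀ x ∈ modularSet ρ, ρ (x - x₀) < ENNReal.ofReal r → |Λ x| ≤ C)) ∧
    -- (vii) ⇒ (viii)
    ((∀ x₀ ∈ modularSet ρ, ∀ r : ℝ, 0 < r →
        ∃ C : ℝ, ∀ x ∈ modularSet ρ, ρ (x - x₀) < ENNReal.ofReal r → |Λ x| ≤ C) →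
      (∀ A : Set X, A ⊆ modularSet ρ →
        (∃ M : ℝ≥0∞, M < ⊤ ∧ ∀ a ∈ A, ∀ b ∈ A, ρ (a - b) ≤ M) →
        ∃ C : ℝ, ∀ a ∈ A, |Λ a| ≤ C)) ∧
    -- (i) ⇒ norm-boundedness
    ((∀ U : Set ℝ, IsOpen U → IsTauRhoOpen ρ (modularSet ρ ∩ Λ ⁻¹' U)) →
      (∃ C : ℝ, 0 ≤ C ∧ ∀ x ∈ modularSet ρ, |Λ x| ≤ C * luxNorm ρ x)) :=
  modular_dual_characterization_general ρ hρ Λ hadd hsmul
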